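/- The set Λ = { s_{p,q} : q > p ≥ 2 integers }, where s_{p,q} = (1/p)(p/q)^{(1-p)/(q-p)} tanh⁻¹((p/q)^{1/(q-p)}), is countable, and for every β ∈ (0,∞) \ Λ, no two distinct functions H_{β,p} and H_{β,q} (with q > p ≥ 2) share a common stationary point in (0,1). -/
import Mathlib


/-- Inverse hyperbolic tangent. -/
noncomputable def arctanh (x : ℝ) : ℝ := (1 / 2) * Real.log ((1 + x) / (1 - x))

/-- The critical value `s_{p,q}`. -/
noncomputable def s (p q : ℕ) : ℝ :=
  (1 / (p : ℝ)) * ((p : ℝ) / q) ^ (((1 : ℝ) - p) / ((q : ℝ) - p)) *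
    arctanh (((p : ℝ) / q) ^ ((1 : ℝ) / ((q : ℝ) - p)))

theorem stmt_5 :
    Set.Countable {x : ℝ | ∃ p q : ℕ, 2 ≤ p ∧ p < q ∧ x = s p q} ∧
    ∀ β : ℝ, 0 < β → β ∉ {x : ℝ | ∃ p q : ℕ, 2 ≤ p ∧ p < q ∧ x = s p q} →
      ∀ p q : ℕ, 2 ≤ p → p < q →
        ¬ ∃ m : ℝ, 0 < m ∧ m < 1 ∧
          β * p * m ^ (p - 1) = arctanh m ∧
          β * q * m ^ (q - 1) = arctanh m := by
  constructor
  · have hsub : {x : ℝ | ∃ p q : ℕ, 2 ≤ p ∧ p < q ∧ x = s p q} ⊆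
        Set.range (fun pq : ℕ × ℕ => s pq.1 pq.2) := by
      rintro x ⟨p, q, _, _, rfl⟩
      exact ⟨(p, q), rfl⟩
    exact (Set.countable_range _).mono hsub
  · rintro β hβ hβΛ p q hp hpq ⟨m, hm0, hm1, h1, h2⟩
    apply hβΛ
    refine ⟨p, q, hp, hpq, ?_⟩
    have hp0 : (0:ℝ) < p := by exact_mod_cast (by omega : 0 < p)
    have hq0 : (0:ℝ) < q := by exact_mod_cast (by omega : 0 < q)
    have hmp : (0:ℝ) < m ^ (p - 1) := pow_pos hm0 _
    have e : β * ((p:ℝ) * m ^ (p - 1)) = β * ((q:ℝ) * m ^ (q - 1)) := by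
      rw [← mul_assoc, ← mul_assoc, h1, h2]
    have key : (p:ℝ) * m ^ (p - 1) = q * m ^ (q - 1) := mul_left_cancel₀ hβ.ne' e
    have hq_split : m ^ (q - 1) = m ^ (p - 1) * m ^ (q - p) := by
      rw [← pow_add]; congr 1; omega
    have key2 : (p:ℝ) = q * m ^ (q - p) := by
      have h : (p:ℝ) * m ^ (p - 1) = (q * m ^ (q - p)) * m ^ (p - 1) := by
        rw [key, hq_split]; ring
      exact mul_right_cancel₀ hmp.ne' h
    have hmqp : m ^ (q - p) = (p:ℝ) / q := by
      rw [eq_div_iff hq0.ne']; linarith [key2]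
    have hcast : ((q:ℝ) - p) = ((q - p : ℕ) : ℝ) := by
      rw [Nat.cast_sub hpq.le]
    have hdpos : (0:ℝ) < ((q - p : ℕ) : ℝ) := by exact_mod_cast (by omega : 0 < q - p)
    have hm_eq : ((p:ℝ)/q) ^ ((1:ℝ)/((q:ℝ) - p)) = m := by
      rw [← hmqp, hcast, ← Real.rpow_natCast m (q - p), ← Real.rpow_mul hm0.le,
        mul_one_div, div_self hdpos.ne', Real.rpow_one]
    have hpq0 : (0:ℝ) < (p:ℝ)/q := div_pos hp0 hq0
    have hexp : ((p:ℝ)/q) ^ (((1:ℝ) - p)/((q:ℝ) - p)) = (m ^ (p - 1))⁻¹ := by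
      have h1' : ((1:ℝ) - p)/((q:ℝ) - p) = (1/((q:ℝ) - p)) * ((1:ℝ) - p) := by ring
      rw [h1', Real.rpow_mul hpq0.le, hm_eq,
        show ((1:ℝ) - p) = -((p:ℝ) - 1) by ring, Real.rpow_neg hm0.le]
      congr 1
      rw [show ((p:ℝ) - 1) = ((p - 1 : ℕ) : ℝ) by
        rw [Nat.cast_sub (by omega : 1 ≤ p)]; norm_num]
      exact Real.rpow_natCast m (p - 1)
    unfold s
    rw [hm_eq, hexp, ← h1]
    field_simp
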